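/- arXiv:2512.13291 — 4 statements merged into one kernel-verified Lean document; each statement's English description precedes it below -/
import Mathlib

section
/- Let u : [t₀,T) → ℝ be differentiable and positive with lim_{t→T} u(t) = 0, α > 0, and suppose there exist constants 0 < C₁ ≤ C₂ with −C₂ u(t)^{−α} ≤ u'(t) ≤ −C₁ u(t)^{−α} for all t ∈ [t₀,T). Then there exist constants 0 < c₁ ≤ c₂ such that c₁ (T−t)^{1/(1+α)} ≤ u(t) ≤ c₂ (T−t)^{1/(1+α)} for all t ∈ [t₀,T). -/
theorem stmt_3 (t₀ T α C₁ C₂ : ℝ) (u u' : ℝ → ℝ)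
    (ht₀ : t₀ < T) (hα : 0 < α) (hC₁ : 0 < C₁) (hC : C₁ ≤ C₂)
    (hderiv : ∀ t ∈ Set.Ico t₀ T, HasDerivAt u (u' t) t)
    (hpos : ∀ t ∈ Set.Ico t₀ T, 0 < u t)
    (hlim : Filter.Tendsto u (nhdsWithin T (Set.Iio T)) (nhds 0))
    (hup : ∀ t ∈ Set.Ico t₀ T, u' t ≤ -C₁ * u t ^ (-α))
    (hlo : ∀ t ∈ Set.Ico t₀ T, -C₂ * u t ^ (-α) ≤ u' t) :
    ∃ c₁ c₂ : ℝ, 0 < c₁ ∧ c₁ ≤ c₂ ∧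
      ∀ t ∈ Set.Ico t₀ T, c₁ * (T - t) ^ ((1:ℝ)/(1+α)) ≤ u t ∧
        u t ≤ c₂ * (T - t) ^ ((1:ℝ)/(1+α)) := by
  have hα1 : (0:ℝ) < 1 + α := by linarith
  have hC₂ : 0 < C₂ := lt_of_lt_of_le hC₁ hC
  set p : ℝ := 1 + α with hp
  set K₁ : ℝ := (1+α) * C₁ with hK₁
  set K₂ : ℝ := (1+α) * C₂ with hK₂
  have hK₁pos : 0 < K₁ := mul_pos hα1 hC₁
  have hK₂pos : 0 < K₂ := mul_pos hα1 hC₂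
  set v : ℝ → ℝ := fun s => u s ^ p with hv
  have hvderiv : ∀ t ∈ Set.Ico t₀ T, HasDerivAt v (u' t * (p * u t ^ α)) t := by
    intro t ht
    have h := (hderiv t ht).rpow_const (p := p) (Or.inl (hpos t ht).ne')
    simpa [hv, hp, show 1 + α - 1 = α by ring, mul_assoc] using h
  have hcancel : ∀ t ∈ Set.Ico t₀ T, u t ^ (-α) * u t ^ α = 1 := by
    intro t ht
    rw [← Real.rpow_add (hpos t ht)]
    simp
  -- bounds on derivative of v
  have hvd_ub : ∀ t ∈ Set.Ico t₀ T, u' t * (p * u t ^ α) ≤ -K₁ := by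
    intro t ht
    have h1 : (0:ℝ) < p * u t ^ α := mul_pos hα1 (Real.rpow_pos_of_pos (hpos t ht) α)
    have := mul_le_mul_of_nonneg_right (hup t ht) h1.le
    calc u' t * (p * u t ^ α) ≤ -C₁ * u t ^ (-α) * (p * u t ^ α) := this
      _ = -((1+α) * C₁) * (u t ^ (-α) * u t ^ α) := by ring
      _ = -K₁ := by rw [hcancel t ht]; ring
  have hvd_lb : ∀ t ∈ Set.Ico t₀ T, -K₂ ≤ u' t * (p * u t ^ α) := by
    intro t ht
    have h1 : (0:ℝ) < p * u t ^ α := mul_pos hα1 (Real.rpow_pos_of_pos (hpos t ht) α)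
    have := mul_le_mul_of_nonneg_right (hlo t ht) h1.le
    calc -K₂ = -((1+α) * C₂) * (u t ^ (-α) * u t ^ α) := by rw [hcancel t ht]; ring
      _ = -C₂ * u t ^ (-α) * (p * u t ^ α) := by ring
      _ ≤ u' t * (p * u t ^ α) := this
  -- limit of v
  have hvlim : Filter.Tendsto v (nhdsWithin T (Set.Iio T)) (nhds 0) := by
    have hc : ContinuousAt (fun x : ℝ => x ^ p) 0 :=
      Real.continuousAt_rpow_const 0 p (Or.inr hα1.le)
    have h0 : (0:ℝ) ^ p = 0 := Real.zero_rpow hα1.ne'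
    have := hc.tendsto.comp hlim
    rw [h0] at this
    exact this
  -- lower bound on v
  have hvlb : ∀ t ∈ Set.Ico t₀ T, K₁ * (T - t) ≤ v t := by
    intro t ht
    have hanti : AntitoneOn (fun s => v s + K₁ * s) (Set.Ico t₀ T) := by
      apply antitoneOn_of_deriv_nonpos (convex_Ico t₀ T)
      · intro s hs
        exact (((hvderiv s hs).continuousAt).continuousWithinAt).add
          (continuous_const.mul continuous_id).continuousWithinAt
      · intro s hs
        rw [interior_Ico] at hs
        have hs' : s ∈ Set.Ico t₀ T := ⟨hs.1.le, hs.2⟩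
        exact (((hvderiv s hs').add (by simpa using (hasDerivAt_id s).const_mul K₁)).differentiableAt).differentiableWithinAt
      · intro s hs
        rw [interior_Ico] at hs
        have hs' : s ∈ Set.Ico t₀ T := ⟨hs.1.le, hs.2⟩
        have hd : HasDerivAt (fun s => v s + K₁ * s) (u' s * (p * u s ^ α) + K₁) s :=
          (hvderiv s hs').add (by simpa using (hasDerivAt_id s).const_mul K₁)
        rw [hd.deriv]
        have := hvd_ub s hs'
        linarith
    have hlim2 : Filter.Tendsto (fun s => v s + K₁ * s) (nhdsWithin T (Set.Iio T))
        (nhds (0 + K₁ * T)) :=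
      hvlim.add (((continuous_const.mul continuous_id).tendsto T).mono_left nhdsWithin_le_nhds)
    have hev : ∀ᶠ s in nhdsWithin T (Set.Iio T), v s + K₁ * s ≤ v t + K₁ * t := by
      have hmem : Set.Ioo t T ∈ nhdsWithin T (Set.Iio T) :=
        Ioo_mem_nhdsLT_of_mem ⟨ht.2, le_refl T⟩
      filter_upwards [hmem] with s hs
      exact hanti ht ⟨le_trans ht.1 hs.1.le, hs.2⟩ hs.1.le
    have := le_of_tendsto hlim2 hev
    linarith
  -- upper bound on v
  have hvub : ∀ t ∈ Set.Ico t₀ T, v t ≤ K₂ * (T - t) := by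
    intro t ht
    have hmono : MonotoneOn (fun s => v s + K₂ * s) (Set.Ico t₀ T) := by
      apply monotoneOn_of_deriv_nonneg (convex_Ico t₀ T)
      · intro s hs
        exact (((hvderiv s hs).continuousAt).continuousWithinAt).add
          (continuous_const.mul continuous_id).continuousWithinAt
      · intro s hs
        rw [interior_Ico] at hs
        have hs' : s ∈ Set.Ico t₀ T := ⟨hs.1.le, hs.2⟩
        exact (((hvderiv s hs').add (by simpa using (hasDerivAt_id s).const_mul K₂)).differentiableAt).differentiableWithinAt
      · intro s hs
        rw [interior_Ico] at hs
        have hs' : s ∈ Set.Ico t₀ T := ⟨hs.1.le, hs.2⟩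
        have hd : HasDerivAt (fun s => v s + K₂ * s) (u' s * (p * u s ^ α) + K₂) s :=
          (hvderiv s hs').add (by simpa using (hasDerivAt_id s).const_mul K₂)
        rw [hd.deriv]
        have := hvd_lb s hs'
        linarith
    have hlim2 : Filter.Tendsto (fun s => v s + K₂ * s) (nhdsWithin T (Set.Iio T))
        (nhds (0 + K₂ * T)) :=
      hvlim.add (((continuous_const.mul continuous_id).tendsto T).mono_left nhdsWithin_le_nhds)
    have hev : ∀ᶠ s in nhdsWithin T (Set.Iio T), v t + K₂ * t ≤ v s + K₂ * s := by
      have hmem : Set.Ioo t T ∈ nhdsWithin T (Set.Iio T) :=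
        Ioo_mem_nhdsLT_of_mem ⟨ht.2, le_refl T⟩
      filter_upwards [hmem] with s hs
      exact hmono ht ⟨le_trans ht.1 hs.1.le, hs.2⟩ hs.1.le
    have := ge_of_tendsto hlim2 hev
    linarith
  -- conclude
  refine ⟨K₁ ^ ((1:ℝ)/p), K₂ ^ ((1:ℝ)/p), Real.rpow_pos_of_pos hK₁pos _,
    Real.rpow_le_rpow hK₁pos.le (by rw [hK₁, hK₂]; nlinarith) (by positivity), ?_⟩
  intro t ht
  have hTt : (0:ℝ) ≤ T - t := by linarith [ht.2]
  have huv : (v t) ^ ((1:ℝ)/p) = u t := by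
    rw [hv, ← Real.rpow_mul (hpos t ht).le, mul_one_div_cancel hα1.ne', Real.rpow_one]
  constructor
  · have h1 : (K₁ * (T - t)) ^ ((1:ℝ)/p) ≤ (v t) ^ ((1:ℝ)/p) :=
      Real.rpow_le_rpow (by positivity) (hvlb t ht) (by positivity)
    rw [Real.mul_rpow hK₁pos.le hTt, huv] at h1
    exact h1
  · have h1 : (v t) ^ ((1:ℝ)/p) ≤ (K₂ * (T - t)) ^ ((1:ℝ)/p) :=
      Real.rpow_le_rpow (Real.rpow_nonneg (hpos t ht).le p) (hvub t ht) (by positivity)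
    rw [Real.mul_rpow hK₂pos.le hTt, huv] at h1
    exact h1
end

section
/- Let α > 0 and r ∈ ℝ with r > 0. Then lim_{x→0⁺} (∫₀ˣ s^α (log(1/s))^r ds) / (x^{1+α} (log(1/x))^r) = 1/(1+α). -/
/-!
Both the integral `F x = ∫₀ˣ s^α (log (1/s))^r ds` and `G x = x^{1+α} (log (1/x))^r` tend to `0`
as `x → 0⁺`, since a positive power of `x` beats any power of the logarithm. By L'Hôpital's rule
the limit of `F / G` is that of
`F' / G' = x^α L^r / (x^α L^r (1 + α - r / L)) = 1 / (1 + α - r / L)` with `L = log (1/x) → ∞`,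
which is `1 / (1 + α)`.
-/

open Real Filter Set Topology MeasureTheory intervalIntegral

section Primitive

variable {f : ℝ → ℝ} {a b : ℝ}

theorem tendsto_integral_nhdsGT_of_continuousOn_Ico (hab : a < b)
    (hf : ContinuousOn f (Ico a b)) :
    Tendsto (fun x => ∫ t in a..x, f t) (𝓝[>] a) (𝓝 0) := by
  obtain ⟨c, hac, hcb⟩ := exists_between hab
  have hint : IntegrableOn f (uIcc a c) :=
    (hf.mono (by rw [uIcc_of_le hac.le]; exact Icc_subset_Ico_right hcb)).integrableOn_compact
      isCompact_uIcc
  have hcont : ContinuousWithinAt (fun x => ∫ t in a..x, f t) (uIcc a c) a :=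
    continuousOn_primitive_interval hint a left_mem_uIcc
  rw [ContinuousWithinAt, integral_same] at hcont
  refine hcont.mono_left (nhdsWithin_le_of_mem ?_)
  filter_upwards [Ioo_mem_nhdsGT hac] with x hx
  rw [uIcc_of_le hac.le]
  exact Ioo_subset_Icc_self hx

theorem hasDerivAt_integral_of_continuousOn_Ico (hf : ContinuousOn f (Ico a b)) {x : ℝ}
    (hx : x ∈ Ioo a b) : HasDerivAt (fun u => ∫ t in a..u, f t) (f x) x :=
  integral_hasDerivAt_right
    (hf.mono (by rw [uIcc_of_le hx.1.le]; exact Icc_subset_Ico_right hx.2)).intervalIntegrable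
    ((hf.mono Ioo_subset_Ico_self).stronglyMeasurableAtFilter isOpen_Ioo x hx)
    (hf.continuousAt (Ico_mem_nhds hx.1 hx.2))

end Primitive

theorem tendsto_log_one_div_nhdsGT_zero :
    Tendsto (fun x : ℝ => log (1 / x)) (𝓝[>] 0) atTop := by
  simp only [one_div, log_inv]
  exact tendsto_neg_atBot_atTop.comp tendsto_log_nhdsGT_zero

theorem tendsto_rpow_mul_log_one_div_rpow_nhdsGT_zero {c : ℝ} (hc : 0 < c) (r : ℝ) :
    Tendsto (fun x : ℝ => x ^ c * log (1 / x) ^ r) (𝓝[>] 0) (𝓝 0) := by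
  refine ((tendsto_rpow_mul_exp_neg_mul_atTop_nhds_zero r c hc).comp
    tendsto_log_one_div_nhdsGT_zero).congr' ?_
  filter_upwards [self_mem_nhdsWithin] with x (hx : 0 < x)
  rw [Function.comp_apply, one_div, log_inv, neg_mul_neg, mul_comm c, ← rpow_def_of_pos hx,
    mul_comm]

theorem continuousOn_rpow_mul_log_one_div_rpow {α : ℝ} (hα : 0 < α) (r : ℝ) :
    ContinuousOn (fun s : ℝ => s ^ α * log (1 / s) ^ r) (Ico 0 1) := by
  intro s hs
  rcases hs.1.eq_or_lt with rfl | hs0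
  · have hzero : ContinuousWithinAt (fun s : ℝ => s ^ α * log (1 / s) ^ r) (Ioi 0) 0 := by
      simpa [ContinuousWithinAt, zero_rpow hα.ne'] using
        tendsto_rpow_mul_log_one_div_rpow_nhdsGT_zero hα r
    exact (continuousWithinAt_insert_self.2 hzero).mono
      (by rw [Ioi_insert]; exact Ico_subset_Ici_self)
  · have hlog : 0 < log (1 / s) := log_pos (one_lt_one_div hs0 hs.2)
    exact ((continuousAt_rpow_const s α (.inl hs0.ne')).mul
      ((continuousAt_const.div continuousAt_id hs0.ne').log (one_div_pos.2 hs0).ne'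
        |>.rpow_const (.inl hlog.ne'))).continuousWithinAt

theorem hasDerivAt_rpow_mul_log_one_div_rpow (α r : ℝ) {x : ℝ} (hx : 0 < x)
    (hL : log (1 / x) ≠ 0) :
    HasDerivAt (fun x : ℝ => x ^ (1 + α) * log (1 / x) ^ r)
      (x ^ α * log (1 / x) ^ r * (1 + α - r / log (1 / x))) x := by
  have hpow : HasDerivAt (fun x : ℝ => x ^ (1 + α)) ((1 + α) * x ^ α) x := by
    simpa using hasDerivAt_rpow_const (p := 1 + α) (.inl hx.ne')
  have hlog : HasDerivAt (fun x : ℝ => log (1 / x)) (-x⁻¹) x := by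
    simp only [one_div, log_inv]
    exact (hasDerivAt_log hx.ne').neg
  refine (hpow.mul (hlog.rpow_const (p := r) (.inl hL))).congr_deriv ?_
  rw [rpow_sub_one hL, rpow_add hx, rpow_one]
  field_simp
  ring

theorem stmt_5_general (α r : ℝ) (hα : 0 < α) :
    Filter.Tendsto (fun x : ℝ =>
        (∫ s in (0:ℝ)..x, s ^ α * (Real.log (1/s)) ^ r) /
          (x ^ (1+α) * (Real.log (1/x)) ^ r))
      (nhdsWithin 0 (Set.Ioi 0)) (nhds (1/(1+α))) := by
  have hL := tendsto_log_one_div_nhdsGT_zero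
  have hden : Tendsto (fun x : ℝ => 1 + α - r / log (1 / x)) (𝓝[>] 0) (𝓝 (1 + α)) := by
    simpa using tendsto_const_nhds.sub (hL.const_div_atTop r)
  have h1α : 1 + α ≠ 0 := by positivity
  have hx01 : ∀ᶠ x in 𝓝[>] (0 : ℝ), x ∈ Ioo 0 1 := Ioo_mem_nhdsGT one_pos
  have hLpos := hL.eventually_gt_atTop 0
  have hden_ne := hden.eventually_ne h1α
  have hcont := continuousOn_rpow_mul_log_one_div_rpow hα r
  refine HasDerivAt.lhopital_zero_nhdsGT (f' := fun s => s ^ α * log (1 / s) ^ r)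
    (g' := fun x => x ^ α * log (1 / x) ^ r * (1 + α - r / log (1 / x))) ?_ ?_ ?_
    (tendsto_integral_nhdsGT_of_continuousOn_Ico one_pos hcont)
    (tendsto_rpow_mul_log_one_div_rpow_nhdsGT_zero (by positivity) r) ?_
  · filter_upwards [hx01] with x hx using hasDerivAt_integral_of_continuousOn_Ico hcont hx
  · filter_upwards [hx01, hLpos] with x hx hLx
      using hasDerivAt_rpow_mul_log_one_div_rpow α r hx.1 hLx.ne'
  · filter_upwards [hx01, hLpos, hden_ne] with x hx hLx hd
    have hxα := rpow_pos_of_pos hx.1 α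
    have hLr := rpow_pos_of_pos hLx r
    positivity
  · rw [one_div]
    refine (hden.inv₀ h1α).congr' ?_
    filter_upwards [hx01, hLpos] with x hx hLx
    have hxα := rpow_pos_of_pos hx.1 α
    have hLr := rpow_pos_of_pos hLx r
    field_simp

theorem stmt_5 (α r : ℝ) (hα : 0 < α) (hr : 0 < r) :
    Filter.Tendsto (fun x : ℝ =>
        (∫ s in (0:ℝ)..x, s ^ α * (Real.log (1/s)) ^ r) /
          (x ^ (1+α) * (Real.log (1/x)) ^ r))
      (nhdsWithin 0 (Set.Ioi 0)) (nhds (1/(1+α))) :=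
  stmt_5_general α r hα
end

section
/- Let p − β ≥ 1 > q − α, λ, μ, D > 0, and suppose u, v : [0,T) → (0,∞) satisfy u(t) ≤ M for all t and |μ Ψ_{q−α}[u](t) − λ Ψ_{p−β}[v](t)| ≤ D for all t ∈ [0,T), where Ψ_a[g] = g^{1−a}/(1−a) for a ≠ 1 and log g for a = 1. Then v is bounded away from 0: there exists δ > 0 with v(t) ≥ δ for all t ∈ [0,T). -/
noncomputable def Psi (a : ℝ) (g : ℝ → ℝ) (t : ℝ) : ℝ :=
  if a = 1 then Real.log (g t) else g t ^ (1 - a) / (1 - a)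

theorem stmt_10 (T M p q α β lam mu D : ℝ) (u v : ℝ → ℝ)
    (hpβ : 1 ≤ p - β) (hqα : q - α < 1) (hlam : 0 < lam) (hmu : 0 < mu) (hD : 0 < D)
    (hu : ∀ t ∈ Set.Ico (0:ℝ) T, 0 < u t ∧ u t ≤ M)
    (hv : ∀ t ∈ Set.Ico (0:ℝ) T, 0 < v t)
    (hbound : ∀ t ∈ Set.Ico (0:ℝ) T,
      |mu * Psi (q - α) u t - lam * Psi (p - β) v t| ≤ D) :
    ∃ δ > 0, ∀ t ∈ Set.Ico (0:ℝ) T, δ ≤ v t := by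
  have hne : q - α ≠ 1 := ne_of_lt hqα
  -- key lower bound on Psi (p-β) v t
  have key : ∀ t ∈ Set.Ico (0:ℝ) T, -(D / lam) ≤ Psi (p - β) v t := by
    intro t ht
    have hb := hbound t ht
    have hA : 0 ≤ mu * Psi (q - α) u t := by
      have hupos : 0 < u t := (hu t ht).1
      have : 0 ≤ Psi (q - α) u t := by
        unfold Psi
        rw [if_neg hne]
        exact div_nonneg (Real.rpow_pos_of_pos hupos _).le (by linarith)
      positivity
    have h1 : -(D) ≤ mu * Psi (q - α) u t - lam * Psi (p - β) v t := neg_le_of_abs_le hb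
    have h2 : -D ≤ lam * Psi (p - β) v t := by nlinarith [abs_le.mp hb]
    have h3 : -D / lam ≤ Psi (p - β) v t := (div_le_iff₀ hlam).mpr (by linarith)
    calc -(D / lam) = -D / lam := (neg_div _ _).symm
    _ ≤ Psi (p - β) v t := h3
  rcases hpβ.eq_or_lt with heq | hlt
  · -- p - β = 1, Psi = log
    refine ⟨Real.exp (-(D / lam)), Real.exp_pos _, fun t ht => ?_⟩
    have hk := key t ht
    unfold Psi at hk
    rw [if_pos heq.symm] at hk
    calc Real.exp (-(D / lam)) ≤ Real.exp (Real.log (v t)) := Real.exp_le_exp.mpr hk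
    _ = v t := Real.exp_log (hv t ht)
  · -- p - β > 1
    set c : ℝ := p - β - 1 with hc_def
    have hc : 0 < c := by simp [hc_def]; linarith
    set K : ℝ := c * D / lam with hK_def
    have hK : 0 < K := by positivity
    refine ⟨K ^ (-(1 / c)), Real.rpow_pos_of_pos hK _, fun t ht => ?_⟩
    have hvt := hv t ht
    have hk := key t ht
    unfold Psi at hk
    rw [if_neg (by linarith : p - β ≠ 1)] at hk
    have hexp : 1 - (p - β) = -c := by ring
    rw [hexp] at hk
    -- hk : -(D/lam) ≤ v t ^ (-c) / (-c)
    have h3 : v t ^ (-c) ≤ K := by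
      have := hk
      rw [div_neg, le_neg] at this
      have h4 : v t ^ (-c) / c ≤ D / lam := by linarith [this]
      calc v t ^ (-c) = (v t ^ (-c) / c) * c := by field_simp
      _ ≤ (D / lam) * c := by nlinarith
      _ = K := by rw [hK_def]; ring
    have h5 : K ^ (-(1/c)) ≤ (v t ^ (-c)) ^ (-(1/c)) :=
      Real.rpow_le_rpow_of_nonpos (Real.rpow_pos_of_pos hvt _) h3 (neg_nonpos.mpr (by positivity))
    calc K ^ (-(1/c)) ≤ (v t ^ (-c)) ^ (-(1/c)) := h5
    _ = v t ^ ((-c) * (-(1/c))) := (Real.rpow_mul hvt.le _ _).symm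
    _ = v t ^ (1:ℝ) := by congr 1; field_simp
    _ = v t := Real.rpow_one _
end

section
/- Let w, z : closure(Ω) → (0, ∞) be functions on a compact set, and suppose the functions x ↦ w(x) + λ z(x)^{−p} w(x)^{−α} and x ↦ z(x) + μ w(x)^{−q} z(x)^{−β} are continuous (λ, μ, p, q, α, β > 0), w and z are bounded above and bounded below by positive constants, and for every x ∈ closure(Ω): (1 − λα w(x)^{−α−1} z(x)^{−p})(1 − μβ w(x)^{−q} z(x)^{−β−1}) − λμ p q w(x)^{−q−α−1} z(x)^{−p−β−1} ≥ 0 and 1 − μβ w(x)^{−q} z(x)^{−β−1} > 0. Then w and z are continuous on closure(Ω). -/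
/-!
Put `Φ (a, b) = (a + λ b^(-p) a^(-α), b + μ a^(-q) b^(-β))`. The values of `(w, z)` lie in a
compact box and the two nondegeneracy inequalities are closed conditions, so every cluster point
`P` of `(w, z)` at `x₀` satisfies them and, by continuity of `Φ ∘ (w, z)`, `Φ P = Φ (w x₀, z x₀)`.
It therefore suffices that `Φ` is injective where the conditions hold. Since `a^(-α) b^(-p)` and
`a^(-q) b^(-β)` are strictly convex, `Φ P = Φ P'` with `P ≠ P'` gives, for the Jacobians,
`DΦ(P) (P' - P) < 0` and `DΦ(P') (P' - P) > 0` entrywise. Both Jacobians are Z-matrices with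
nonnegative determinant and nonnegative lower diagonal entry, so the first entry of `P' - P` would
have to be both negative and positive.
-/

open Filter Topology Real

lemma one_sub_mul_sub_one_lt_rpow_neg_mul_rpow_neg {α p x y : ℝ} (hα : 0 < α) (hp : 0 < p)
    (hx : 0 < x) (hy : 0 < y) (hne : x ≠ 1 ∨ y ≠ 1) :
    1 - α * (x - 1) - p * (y - 1) < x ^ (-α) * y ^ (-p) := by
  have hlog : α * log x + p * log y < α * (x - 1) + p * (y - 1) := by
    rcases hne with hx1 | hy1
    · exact add_lt_add_of_lt_of_le (mul_lt_mul_of_pos_left (log_lt_sub_one_of_pos hx hx1) hα)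
        (mul_le_mul_of_nonneg_left (log_le_sub_one_of_pos hy) hp.le)
    · exact add_lt_add_of_le_of_lt (mul_le_mul_of_nonneg_left (log_le_sub_one_of_pos hx) hα.le)
        (mul_lt_mul_of_pos_left (log_lt_sub_one_of_pos hy hy1) hp)
  calc 1 - α * (x - 1) - p * (y - 1) < (-α * log x - p * log y) + 1 := by linarith
    _ ≤ exp (-α * log x - p * log y) := add_one_le_exp _
    _ = x ^ (-α) * y ^ (-p) := by
      rw [rpow_def_of_pos hx, rpow_def_of_pos hy, ← exp_add]; ring_nf

lemma rpow_neg_mul_rpow_neg_tangent_lt {α p a b a' b' : ℝ} (hα : 0 < α) (hp : 0 < p)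
    (ha : 0 < a) (hb : 0 < b) (ha' : 0 < a') (hb' : 0 < b') (hne : (a', b') ≠ (a, b)) :
    a ^ (-α) * b ^ (-p) - α * a ^ (-α - 1) * b ^ (-p) * (a' - a)
      - p * a ^ (-α) * b ^ (-p - 1) * (b' - b) < a' ^ (-α) * b' ^ (-p) := by
  have hne' : a' / a ≠ 1 ∨ b' / b ≠ 1 := by
    rw [Ne, Prod.ext_iff, not_and_or] at hne
    rwa [Ne, div_eq_one_iff_eq ha.ne', Ne, div_eq_one_iff_eq hb.ne']
  have hA := rpow_pos_of_pos ha (-α)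
  have hB := rpow_pos_of_pos hb (-p)
  have key := mul_lt_mul_of_pos_left
    (one_sub_mul_sub_one_lt_rpow_neg_mul_rpow_neg hα hp (div_pos ha' ha) (div_pos hb' hb) hne')
    (mul_pos hA hB)
  rw [div_rpow ha'.le ha.le, div_rpow hb'.le hb.le] at key
  calc _ = a ^ (-α) * b ^ (-p) * (1 - α * (a' / a - 1) - p * (b' / b - 1)) := by
        rw [rpow_sub_one ha.ne', rpow_sub_one hb.ne']
        field_simp
    _ < _ := key
    _ = _ := by field_simp

/-- `h₁`, `h₂` say that the Z-matrix `!![a, -b; -c, d]` maps `(u, v)` to a negative vector. -/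
lemma neg_of_zMatrix_mulVec_neg {a b c d u v : ℝ} (hb : 0 < b) (hd : 0 ≤ d)
    (hdet : b * c ≤ a * d) (h₁ : a * u - b * v < 0) (h₂ : d * v - c * u < 0) : u < 0 := by
  by_contra! hu
  have := calc a * d * u = d * (a * u) := by ring
    _ ≤ d * (b * v) := mul_le_mul_of_nonneg_left (by linarith) hd
    _ = b * (d * v) := by ring
    _ < b * (c * u) := mul_lt_mul_of_pos_left (by linarith) hb
    _ ≤ a * d * u := by rw [← mul_assoc]; exact mul_le_mul_of_nonneg_right hdet hu
  exact this.false

lemma jacobian_row_mul_sub_neg_of_eq {lam p α a b a' b' : ℝ} (hlam : 0 < lam) (hp : 0 < p)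
    (hα : 0 < α) (ha : 0 < a) (hb : 0 < b) (ha' : 0 < a') (hb' : 0 < b')
    (hne : (a', b') ≠ (a, b))
    (h : a + lam * b ^ (-p) * a ^ (-α) = a' + lam * b' ^ (-p) * a' ^ (-α)) :
    (1 - lam * α * a ^ (-α - 1) * b ^ (-p)) * (a' - a)
      - lam * p * a ^ (-α) * b ^ (-p - 1) * (b' - b) < 0 := by
  have := mul_lt_mul_of_pos_left (rpow_neg_mul_rpow_neg_tangent_lt hα hp ha hb ha' hb' hne) hlam
  linarith

lemma mul_rpow_cross_eq {lam mu p q α β a b : ℝ} (ha : 0 < a) (hb : 0 < b) :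
    lam * p * a ^ (-α) * b ^ (-p - 1) * (mu * q * b ^ (-β) * a ^ (-q - 1))
      = lam * mu * p * q * a ^ (-q - α - 1) * b ^ (-p - β - 1) := by
  rw [show -q - α - 1 = -α + (-q - 1) by ring, show -p - β - 1 = -p - 1 + -β by ring,
    rpow_add ha, rpow_add hb]
  ring

lemma eq_of_jacobian_det_nonneg {lam mu p q α β a b a' b' : ℝ}
    (hlam : 0 < lam) (hmu : 0 < mu) (hp : 0 < p) (hq : 0 < q) (hα : 0 < α) (hβ : 0 < β)
    (ha : 0 < a) (hb : 0 < b) (ha' : 0 < a') (hb' : 0 < b')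
    (hf : a + lam * b ^ (-p) * a ^ (-α) = a' + lam * b' ^ (-p) * a' ^ (-α))
    (hg : b + mu * a ^ (-q) * b ^ (-β) = b' + mu * a' ^ (-q) * b' ^ (-β))
    (hdet : 0 ≤ (1 - lam * α * a ^ (-α - 1) * b ^ (-p)) *
          (1 - mu * β * a ^ (-q) * b ^ (-β - 1)) -
        lam * mu * p * q * a ^ (-q - α - 1) * b ^ (-p - β - 1))
    (hgb : 0 ≤ 1 - mu * β * a ^ (-q) * b ^ (-β - 1))
    (hdet' : 0 ≤ (1 - lam * α * a' ^ (-α - 1) * b' ^ (-p)) *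
          (1 - mu * β * a' ^ (-q) * b' ^ (-β - 1)) -
        lam * mu * p * q * a' ^ (-q - α - 1) * b' ^ (-p - β - 1))
    (hgb' : 0 ≤ 1 - mu * β * a' ^ (-q) * b' ^ (-β - 1)) :
    (a, b) = (a', b') := by
  by_contra hne
  have hne' : (b', a') ≠ (b, a) := fun h => hne (by simp_all)
  have hlt : a' - a < 0 := by
    refine neg_of_zMatrix_mulVec_neg (by positivity) (by linarith) ?_
      (jacobian_row_mul_sub_neg_of_eq hlam hp hα ha hb ha' hb' (Ne.symm hne) hf)
      (jacobian_row_mul_sub_neg_of_eq hmu hq hβ hb ha hb' ha' hne' hg)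
    rw [mul_rpow_cross_eq ha hb]
    linarith
  have hgt : a - a' < 0 := by
    refine neg_of_zMatrix_mulVec_neg (by positivity) (by linarith) ?_
      (jacobian_row_mul_sub_neg_of_eq hlam hp hα ha' hb' ha hb hne hf.symm)
      (jacobian_row_mul_sub_neg_of_eq hmu hq hβ hb' ha' hb ha (Ne.symm hne') hg.symm)
    rw [mul_rpow_cross_eq ha' hb']
    linarith
  linarith

lemma tendsto_of_tendsto_comp_of_injective_at {ι X Y : Type*} [TopologicalSpace X]
    [TopologicalSpace Y] [T2Space Y] {l : Filter ι} {f : ι → X} {Φ : X → Y} {S : Set X} {x₀ : X}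
    (hS : IsCompact S) (hfS : ∀ᶠ i in l, f i ∈ S) (hΦ : ∀ x ∈ S, ContinuousAt Φ x)
    (hΦf : Tendsto (Φ ∘ f) l (𝓝 (Φ x₀))) (hinj : ∀ x ∈ S, Φ x = Φ x₀ → x = x₀) :
    Tendsto f l (𝓝 x₀) :=
  hS.tendsto_nhds_of_unique_mapClusterPt hfS fun x hx hcl =>
    hinj x hx (eq_of_nhds_neBot ((hcl.continuousAt_comp (hΦ x hx)).clusterPt.mono hΦf))

theorem stmt_16_general {N : ℕ} (K : Set (Fin N → ℝ))
    (w z : (Fin N → ℝ) → ℝ) (lam mu p q α β m M : ℝ)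
    (hlam : 0 < lam) (hmu : 0 < mu) (hp : 0 < p) (hq : 0 < q)
    (hα : 0 < α) (hβ : 0 < β) (hm : 0 < m)
    (hwb : ∀ x ∈ K, m ≤ w x ∧ w x ≤ M) (hzb : ∀ x ∈ K, m ≤ z x ∧ z x ≤ M)
    (hc1 : ContinuousOn (fun x => w x + lam * z x ^ (-p) * w x ^ (-α)) K)
    (hc2 : ContinuousOn (fun x => z x + mu * w x ^ (-q) * z x ^ (-β)) K)
    (hdet : ∀ x ∈ K,
      0 ≤ (1 - lam * α * w x ^ (-α - 1) * z x ^ (-p)) *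
          (1 - mu * β * w x ^ (-q) * z x ^ (-β - 1)) -
        lam * mu * p * q * w x ^ (-q - α - 1) * z x ^ (-p - β - 1))
    (hpos : ∀ x ∈ K, 0 < 1 - mu * β * w x ^ (-q) * z x ^ (-β - 1)) :
    ContinuousOn w K ∧ ContinuousOn z K := by
  set box := Set.Icc m M ×ˢ Set.Icc m M
  let D : ℝ × ℝ → ℝ := fun y => (1 - lam * α * y.1 ^ (-α - 1) * y.2 ^ (-p)) *
      (1 - mu * β * y.1 ^ (-q) * y.2 ^ (-β - 1)) -
    lam * mu * p * q * y.1 ^ (-q - α - 1) * y.2 ^ (-p - β - 1)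
  let G : ℝ × ℝ → ℝ := fun y => 1 - mu * β * y.1 ^ (-q) * y.2 ^ (-β - 1)
  let Φ : ℝ × ℝ → ℝ × ℝ := fun y =>
    (y.1 + lam * y.2 ^ (-p) * y.1 ^ (-α), y.2 + mu * y.1 ^ (-q) * y.2 ^ (-β))
  let S := box ∩ D ⁻¹' Set.Ici 0 ∩ G ⁻¹' Set.Ici 0
  have hbox_pos : ∀ y ∈ box, 0 < y.1 ∧ 0 < y.2 := fun y hy =>
    ⟨hm.trans_le hy.1.1, hm.trans_le hy.2.1⟩
  have hcont : ∀ y ∈ box, ContinuousAt Φ y ∧ ContinuousAt D y ∧ ContinuousAt G y := by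
    intro y hy
    obtain ⟨h1, h2⟩ := hbox_pos y hy
    refine ⟨?_, ?_, ?_⟩ <;> fun_prop (disch := first | exact Or.inl h1.ne' | exact Or.inl h2.ne')
  have hS : IsCompact S := by
    have hbox : IsCompact box := isCompact_Icc.prod isCompact_Icc
    have hD : IsClosed (box ∩ D ⁻¹' Set.Ici 0) :=
      ContinuousOn.preimage_isClosed_of_isClosed
        (fun y hy => (hcont y hy).2.1.continuousWithinAt) hbox.isClosed isClosed_Ici
    exact hbox.of_isClosed_subset (ContinuousOn.preimage_isClosed_of_isClosed
      (fun y hy => (hcont y hy.1).2.2.continuousWithinAt) hD isClosed_Ici)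
      (Set.inter_subset_left.trans Set.inter_subset_left)
  have hmem : ∀ x ∈ K, (w x, z x) ∈ S := fun x hx =>
    ⟨⟨⟨hwb x hx, hzb x hx⟩, hdet x hx⟩, (hpos x hx).le⟩
  have hpair : ContinuousOn (fun x => (w x, z x)) K := fun x₀ hx₀ =>
    tendsto_of_tendsto_comp_of_injective_at hS (eventually_nhdsWithin_of_forall hmem)
      (fun y hy => (hcont y hy.1.1).1) ((hc1.prodMk hc2) x₀ hx₀) fun y hy hΦ => by
        obtain ⟨ha, hb⟩ := hbox_pos y hy.1.1
        obtain ⟨ha', hb'⟩ := hbox_pos _ (hmem x₀ hx₀).1.1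
        obtain ⟨hf, hg⟩ := Prod.ext_iff.mp hΦ
        exact eq_of_jacobian_det_nonneg hlam hmu hp hq hα hβ ha hb ha' hb' hf hg hy.1.2 hy.2
          (hdet x₀ hx₀) (hpos x₀ hx₀).le
  exact ⟨continuous_fst.comp_continuousOn hpair, continuous_snd.comp_continuousOn hpair⟩

theorem stmt_16 {N : ℕ} (K : Set (Fin N → ℝ)) (hK : IsCompact K)
    (w z : (Fin N → ℝ) → ℝ) (lam mu p q α β m M : ℝ)
    (hlam : 0 < lam) (hmu : 0 < mu) (hp : 0 < p) (hq : 0 < q)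
    (hα : 0 < α) (hβ : 0 < β) (hm : 0 < m)
    (hwb : ∀ x ∈ K, m ≤ w x ∧ w x ≤ M) (hzb : ∀ x ∈ K, m ≤ z x ∧ z x ≤ M)
    (hc1 : ContinuousOn (fun x => w x + lam * z x ^ (-p) * w x ^ (-α)) K)
    (hc2 : ContinuousOn (fun x => z x + mu * w x ^ (-q) * z x ^ (-β)) K)
    (hdet : ∀ x ∈ K,
      0 ≤ (1 - lam * α * w x ^ (-α - 1) * z x ^ (-p)) *
          (1 - mu * β * w x ^ (-q) * z x ^ (-β - 1)) -
        lam * mu * p * q * w x ^ (-q - α - 1) * z x ^ (-p - β - 1))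
    (hpos : ∀ x ∈ K, 0 < 1 - mu * β * w x ^ (-q) * z x ^ (-β - 1)) :
    ContinuousOn w K ∧ ContinuousOn z K :=
  stmt_16_general K w z lam mu p q α β m M hlam hmu hp hq hα hβ hm hwb hzb hc1 hc2 hdet hpos
end
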